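/- For every positive integer ℓ, the sum of c(ℓ,k)/(ℓ! · 4^k) over k from 1 to ℓ with k even equals (1/2)(Γ(ℓ+1/4)/(Γ(1/4) ℓ!) − Γ(ℓ−1/4)/(4 Γ(3/4) ℓ!)), and the corresponding sum over odd k equals (1/2)(Γ(ℓ+1/4)/(Γ(1/4) ℓ!) + Γ(ℓ−1/4)/(4 Γ(3/4) ℓ!)). -/

import Mathlib

/-!
Removing the letter `0` from a permutation of `{0, …, n}` either deletes a fixed point or cuts
`0` out of a cycle of length at least two; conversely `0` can be added as a new cycle or spliced
in after any of the `n` other letters. Hence `∑_σ x ^ (number of cycles of σ)` is the rising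
factorial `x (x + 1) ⋯ (x + n - 1)`, and so is `∑_k c(n, k) x ^ k`. Its values at `x = ±1/4` are
the sum and the difference of the even and odd parts, and `Γ(x + n) = x (x + 1) ⋯ (x + n - 1) Γ(x)`
together with `Γ(3/4) = -Γ(-1/4) / 4` turns both values into quotients of Gamma values.
-/

/-- Number of cycles of a permutation, counting fixed points as cycles of length 1. -/
def numCycles {n : ℕ} (σ : Equiv.Perm (Fin n)) : ℕ :=
  Multiset.card σ.cycleType + (n - σ.cycleType.sum)

/-- Number of cycles of even length of a permutation. -/
def numEvenCycles {n : ℕ} (σ : Equiv.Perm (Fin n)) : ℕ :=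
  Multiset.card (σ.cycleType.filter (fun d => Even d))

/-- The unsigned Stirling number of the first kind: the number of permutations of
`ℓ` letters with exactly `k` cycles. -/
noncomputable def stirlingC (ℓ k : ℕ) : ℕ :=
  Nat.card {σ : Equiv.Perm (Fin ℓ) // numCycles σ = k}

open Finset Equiv Equiv.Perm

namespace Nat.Partition

theorem card_parts_le {n : ℕ} (p : n.Partition) : Multiset.card p.parts ≤ n := by
  simpa [p.parts_sum] using
    Multiset.card_nsmul_le_sum fun i hi => Nat.one_le_iff_ne_zero.mpr (p.parts_pos hi).ne'

theorem card_parts_pos {n : ℕ} (p : n.Partition) (hn : 0 < n) : 0 < Multiset.card p.parts := by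
  refine Multiset.card_pos.mpr fun h => hn.ne' ?_
  rw [← p.parts_sum, h, Multiset.sum_zero]

end Nat.Partition

namespace Equiv.Perm

variable {α : Type*} [Fintype α] [DecidableEq α]

theorem card_parts_partition (σ : Perm α) :
    Multiset.card σ.partition.parts =
      Multiset.card σ.cycleType + (Fintype.card α - #σ.support) := by
  simp [parts_partition]

theorem Disjoint.card_parts_partition_mul {σ τ : Perm α} (h : Disjoint σ τ) :
    Multiset.card (σ * τ).partition.parts + Fintype.card α =
      Multiset.card σ.partition.parts + Multiset.card τ.partition.parts := by
  have := (σ * τ).support.card_le_univ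
  simp only [card_parts_partition, h.cycleType_mul, h.card_support_mul, Multiset.card_add] at *
  omega

theorem IsCycle.card_parts_partition_swap_mul {c : Perm α} (hc : c.IsCycle) {a : α}
    (ha : c a ≠ a) :
    Multiset.card (swap a (c a) * c).partition.parts = Multiset.card c.partition.parts + 1 := by
  have hsupp := c.support.card_le_univ
  have hcard := hc.two_le_card_support
  rw [card_parts_partition, card_parts_partition, hc.cycleType, Multiset.card_singleton]
  by_cases h2 : c (c a) = a
  · have hc_swap := hc.eq_swap_of_apply_apply_eq_self ha h2
    have hcard2 : #c.support = 2 := by rw [hc_swap, card_support_swap ha.symm]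
    have h_one : swap a (c a) * c = 1 := by nth_rewrite 2 [hc_swap]; exact swap_mul_self _ _
    simp only [h_one, cycleType_one, Multiset.card_zero, support_one, card_empty]
    omega
  · rw [(hc.swap_mul ha h2).cycleType, support_swap_mul_eq c a h2,
      card_sdiff_of_subset (singleton_subset_iff.mpr (mem_support.mpr ha)), card_singleton,
      Multiset.card_singleton]
    omega

theorem card_parts_partition_swap_mul {τ : Perm α} {a : α} (ha : τ a ≠ a) :
    Multiset.card (swap a (τ a) * τ).partition.parts = Multiset.card τ.partition.parts + 1 := by
  set c := τ.cycleOf a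
  have hca : c a = τ a := cycleOf_apply_self τ a
  have hcycle : c.IsCycle := isCycle_cycleOf τ ha
  obtain ⟨d, hτ, hdc⟩ : ∃ d, τ = d * c ∧ Disjoint d c :=
    ⟨τ * c⁻¹, by simp, disjoint_mul_inv_of_mem_cycleFactorsFinset
      (cycleOf_mem_cycleFactorsFinset_iff.mpr (mem_support.mpr ha))⟩
  rw [← hca] at ha ⊢
  have hswap_le : (swap a (c a)).support ≤ c.support := by
    rw [support_swap ha.symm, insert_subset_iff, singleton_subset_iff]
    exact ⟨mem_support.mpr ha, mem_support.mpr fun h => ha (c.injective h)⟩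
  have hdc' : Disjoint d (swap a (c a) * c) :=
    hdc.mono le_rfl ((support_mul_le _ _).trans (sup_le hswap_le le_rfl))
  have hσ : swap a (c a) * τ = d * (swap a (c a) * c) := by
    rw [hτ, ← mul_assoc, ← mul_assoc, (hdc.mono le_rfl hswap_le).commute.eq]
  have := hdc.card_parts_partition_mul
  have := hdc'.card_parts_partition_mul
  have := hcycle.card_parts_partition_swap_mul ha
  rw [hσ]
  conv_rhs => rw [hτ]
  omega

theorem decomposeFin_symm_zero_eq_extendDomain {n : ℕ} (e : Perm (Fin n)) :
    decomposeFin.symm (0, e) = e.extendDomain (finSuccAboveEquiv 0) := by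
  ext x : 1
  induction x using Fin.cases with
  | zero => rw [decomposeFin_symm_apply_zero, extendDomain_apply_not_subtype _ _ (by simp)]
  | succ i =>
    rw [decomposeFin_symm_apply_succ, extendDomain_apply_subtype _ _ (b := i.succ)
      (Fin.succ_ne_zero i)]
    have hi : (finSuccAboveEquiv 0).symm ⟨i.succ, Fin.succ_ne_zero i⟩ = i :=
      (finSuccAboveEquiv 0).symm_apply_eq.mpr (Subtype.ext (by simp [finSuccAboveEquiv_apply]))
    simp [hi, finSuccAboveEquiv_apply]

end Equiv.Perm

theorem numCycles_eq_card_parts_partition {n : ℕ} (σ : Perm (Fin n)) :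
    numCycles σ = Multiset.card σ.partition.parts := by
  rw [numCycles, card_parts_partition, sum_cycleType, Fintype.card_fin]

theorem numCycles_mem_Icc {n : ℕ} (hn : 0 < n) (σ : Perm (Fin n)) : numCycles σ ∈ Icc 1 n := by
  rw [numCycles_eq_card_parts_partition, mem_Icc]
  exact ⟨σ.partition.card_parts_pos (by simpa using hn),
    σ.partition.card_parts_le.trans_eq (Fintype.card_fin n)⟩

theorem numCycles_decomposeFin_symm_zero {n : ℕ} (e : Perm (Fin n)) :
    numCycles (decomposeFin.symm (0, e)) = numCycles e + 1 := by
  have := e.support.card_le_univ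
  rw [Fintype.card_fin] at this
  rw [decomposeFin_symm_zero_eq_extendDomain, numCycles, numCycles, cycleType_extendDomain,
    sum_cycleType]
  omega

theorem numCycles_decomposeFin_symm_of_ne_zero {n : ℕ} {p : Fin (n + 1)} (hp : p ≠ 0)
    (e : Perm (Fin n)) : numCycles (decomposeFin.symm (p, e)) = numCycles e := by
  have h := card_parts_partition_swap_mul (τ := decomposeFin.symm (p, e)) (a := 0) (by simpa)
  have hswap : swap 0 p * decomposeFin.symm (p, e) = decomposeFin.symm (0, e) := by
    ext x : 1
    induction x using Fin.cases <;> simp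
  rw [decomposeFin_symm_apply_zero, hswap, ← numCycles_eq_card_parts_partition,
    ← numCycles_eq_card_parts_partition, numCycles_decomposeFin_symm_zero] at h
  omega

theorem sum_pow_numCycles {R : Type*} [CommSemiring R] (n : ℕ) (x : R) :
    ∑ σ : Perm (Fin n), x ^ numCycles σ = (ascPochhammer R n).eval x := by
  induction n with
  | zero => simp [numCycles]
  | succ n ih =>
    rw [← decomposeFin.symm.sum_comp, Fintype.sum_prod_type, Fin.sum_univ_succ,
      ascPochhammer_succ_eval, ← ih]
    simp only [numCycles_decomposeFin_symm_zero, numCycles_decomposeFin_symm_of_ne_zero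
      (Fin.succ_ne_zero _), pow_succ, sum_const, card_univ, Fintype.card_fin, nsmul_eq_mul,
      ← sum_mul]
    ring

theorem sum_stirlingC_mul_pow {R : Type*} [CommSemiring R] {ℓ : ℕ} (hℓ : 0 < ℓ) (y : R) :
    ∑ k ∈ Icc 1 ℓ, (stirlingC ℓ k : R) * y ^ k = (ascPochhammer R ℓ).eval y := by
  rw [← sum_pow_numCycles, ← sum_fiberwise_of_maps_to fun σ _ => numCycles_mem_Icc hℓ σ]
  refine sum_congr rfl fun k _ => ?_
  rw [stirlingC, Nat.card_eq_fintype_card, Fintype.card_subtype,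
    sum_congr rfl fun σ hσ => by rw [(mem_filter.mp hσ).2], sum_const, nsmul_eq_mul]

theorem Real.Gamma_add_nat_eq_ascPochhammer_mul {x : ℝ} (hx : ∀ k : ℕ, x ≠ -k) (n : ℕ) :
    Real.Gamma (x + n) = (ascPochhammer ℝ n).eval x * Real.Gamma x := by
  induction n with
  | zero => simp
  | succ n ih =>
    have hxn : x + n ≠ 0 := fun h => hx n (eq_neg_of_add_eq_zero_left h)
    rw [Nat.cast_succ, ← add_assoc, Real.Gamma_add_one hxn, ih, ascPochhammer_succ_eval]
    ring

theorem ascPochhammer_eval_one_div_four (n : ℕ) :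
    (ascPochhammer ℝ n).eval (1 / 4) = Real.Gamma (n + 1 / 4) / Real.Gamma (1 / 4) := by
  have hx : ∀ k : ℕ, (1 / 4 : ℝ) ≠ -k := fun k => by
    have : (0 : ℝ) ≤ k := k.cast_nonneg
    linarith
  rw [add_comm, Real.Gamma_add_nat_eq_ascPochhammer_mul hx,
    mul_div_cancel_right₀ _ (Real.Gamma_pos_of_pos (by norm_num)).ne']

theorem ascPochhammer_eval_neg_one_div_four (n : ℕ) :
    (ascPochhammer ℝ n).eval (-(1 / 4)) =
      -(Real.Gamma (n - 1 / 4) / (4 * Real.Gamma (3 / 4))) := by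
  have hx : ∀ k : ℕ, -(1 / 4 : ℝ) ≠ -k := fun k h => by
    rcases k.eq_zero_or_pos with rfl | hk
    · norm_num at h
    · have : (1 : ℝ) ≤ k := by exact_mod_cast hk
      linarith
  have hG : Real.Gamma (3 / 4) = -(1 / 4) * Real.Gamma (-(1 / 4)) := by
    rw [← Real.Gamma_add_one (by norm_num)]
    norm_num
  have hG₃ : Real.Gamma (3 / 4) ≠ 0 := (Real.Gamma_pos_of_pos (by norm_num)).ne'
  have hG_neg : Real.Gamma (-(1 / 4)) ≠ 0 := fun h => hG₃ (by rw [hG, h, mul_zero])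
  rw [sub_eq_neg_add, Real.Gamma_add_nat_eq_ascPochhammer_mul hx, hG]
  field_simp

theorem Finset.sum_filter_even_add_sum_filter_odd {M : Type*} [AddCommMonoid M]
    (s : Finset ℕ) (f : ℕ → M) :
    ∑ k ∈ s with Even k, f k + ∑ k ∈ s with Odd k, f k = ∑ k ∈ s, f k := by
  simp_rw [← Nat.not_even_iff_odd]
  exact sum_filter_add_sum_filter_not s _ f

theorem Finset.sum_mul_neg_pow {R : Type*} [Ring R] (s : Finset ℕ) (a : ℕ → R) (y : R) :
    ∑ k ∈ s, a k * (-y) ^ k =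
      ∑ k ∈ s with Even k, a k * y ^ k - ∑ k ∈ s with Odd k, a k * y ^ k := by
  rw [← sum_filter_even_add_sum_filter_odd, sub_eq_add_neg, ← sum_neg_distrib]
  congr 1 <;> refine sum_congr rfl fun k hk => ?_
  · rw [(mem_filter.mp hk).2.neg_pow]
  · rw [(mem_filter.mp hk).2.neg_pow, mul_neg]

theorem stmt_18 (ℓ : ℕ) (hℓ : 0 < ℓ) :
    ∑ k ∈ (Finset.Icc 1 ℓ).filter (fun k => Even k),
        (stirlingC ℓ k : ℝ) / (Nat.factorial ℓ * 4 ^ k)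
      = (1 / 2) * (Real.Gamma ((ℓ : ℝ) + 1 / 4) / (Real.Gamma (1 / 4) * Nat.factorial ℓ)
          - Real.Gamma ((ℓ : ℝ) - 1 / 4) / (4 * Real.Gamma (3 / 4) * Nat.factorial ℓ)) ∧
    ∑ k ∈ (Finset.Icc 1 ℓ).filter (fun k => Odd k),
        (stirlingC ℓ k : ℝ) / (Nat.factorial ℓ * 4 ^ k)
      = (1 / 2) * (Real.Gamma ((ℓ : ℝ) + 1 / 4) / (Real.Gamma (1 / 4) * Nat.factorial ℓ)
          + Real.Gamma ((ℓ : ℝ) - 1 / 4) / (4 * Real.Gamma (3 / 4) * Nat.factorial ℓ)) := by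
  have h_term : ∀ k, (stirlingC ℓ k : ℝ) / (ℓ.factorial * 4 ^ k) =
      (stirlingC ℓ k : ℝ) * (1 / 4) ^ k / ℓ.factorial := fun k => by
    rw [one_div_pow, mul_one_div, div_div, mul_comm (4 ^ k : ℝ)]
  simp_rw [h_term, ← sum_div]
  set E := ∑ k ∈ Icc 1 ℓ with Even k, (stirlingC ℓ k : ℝ) * (1 / 4) ^ k
  set O := ∑ k ∈ Icc 1 ℓ with Odd k, (stirlingC ℓ k : ℝ) * (1 / 4) ^ k
  have h_add : E + O = Real.Gamma (ℓ + 1 / 4) / Real.Gamma (1 / 4) := by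
    rw [sum_filter_even_add_sum_filter_odd, sum_stirlingC_mul_pow hℓ,
      ascPochhammer_eval_one_div_four]
  have h_sub : E - O = -(Real.Gamma (ℓ - 1 / 4) / (4 * Real.Gamma (3 / 4))) := by
    rw [← sum_mul_neg_pow, sum_stirlingC_mul_pow hℓ, ascPochhammer_eval_neg_one_div_four]
  constructor
  · linear_combination (h_add + h_sub) / (2 * ℓ.factorial)
  · linear_combination (h_add - h_sub) / (2 * ℓ.factorial)
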